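/- If k ≥ 0 and G is a maximal outerplanar graph of order n ≤ 2k+7, then the K_{1,k+1}-isolation number ι_k(G) is at most 1. -/

import Mathlib

/-!
Number the vertices of the mop along its Hamiltonian cycle. The chords of a convex `m`-gon that
pairwise do not cross number at most `2 m - 3`, so a mop, which has `2 n - 3` edges, admits no
further noncrossing chord; hence every edge is the side of a triangle on either side, and the
three arcs of the cycle cut off by a triangle are joined by no edge. Descending from the edge
`0 (n - 1)` into the larger side produces a triangle whose arcs have at most `k + 2` vertices
each; as they hold `n - 3 ≤ 2 k + 4` vertices together, one holds at most `k + 1`. Let `v` be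
the opposite vertex of the triangle. A vertex outside `N[v]` has its neighbours outside `N[v]` in
its own arc, minus itself and, on the two arcs at `v`, minus the cycle neighbour of `v`: at most
`k` of them.
-/

namespace MopPaper

/-- Cyclic successor on `Fin n`. -/
def finNext {n : ℕ} (i : Fin n) : Fin n := ⟨(i.val + 1) % n, Nat.mod_lt _ i.pos⟩

/-- A witness that `G` is a maximal outerplanar graph (mop): a cyclic ordering
`σ` of the vertices such that all Hamiltonian (boundary) edges are present,
no two edges cross with respect to the cyclic order (outerplanarity),
and `G` has exactly `2n - 3` edges (edge-maximality, i.e. a triangulation). -/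
def MopWitness {V : Type*} (G : SimpleGraph V) (n : ℕ) (σ : Fin n ≃ V) : Prop :=
  (∀ i : Fin n, G.Adj (σ i) (σ (finNext i))) ∧
  (∀ a b c d : Fin n, G.Adj (σ a) (σ b) → G.Adj (σ c) (σ d) →
      ¬ (a < c ∧ c < b ∧ b < d)) ∧
  Nat.card G.edgeSet = 2 * n - 3

/-- `G` is a maximal outerplanar graph (on at least 3 vertices). -/
def IsMop {V : Type*} (G : SimpleGraph V) : Prop :=
  ∃ n : ℕ, 3 ≤ n ∧ ∃ σ : Fin n ≃ V, MopWitness G n σ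

/-- `uv` is a Hamiltonian edge of the mop `G`: an edge lying on the (unique)
Hamiltonian cycle of `G`. -/
def IsHamEdge {V : Type*} (G : SimpleGraph V) (u v : V) : Prop :=
  ∃ n : ℕ, 3 ≤ n ∧ ∃ σ : Fin n ≃ V, MopWitness G n σ ∧
    ∃ i : Fin n, (σ i = u ∧ σ (finNext i) = v) ∨ (σ i = v ∧ σ (finNext i) = u)

/-- The closed neighborhood `N[S]` of a set of vertices. -/
def closedNbhd {V : Type*} (G : SimpleGraph V) (S : Set V) : Set V :=
  S ∪ {v | ∃ u ∈ S, G.Adj u v}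

/-- The set of vertices of degree 2. -/
def deg2set {V : Type*} (G : SimpleGraph V) : Set V :=
  {v | (G.neighborSet v).ncard = 2}

/-- `S` is a `K_{1,k+1}`-isolating set of `G`: every vertex of `G - N[S]`
has at most `k` neighbors in `G - N[S]`. -/
def IsKIsolating {V : Type*} (G : SimpleGraph V) (k : ℕ) (S : Set V) : Prop :=
  ∀ v ∈ (closedNbhd G S)ᶜ, (G.neighborSet v ∩ (closedNbhd G S)ᶜ).ncard ≤ k

/-- The `K_{1,k+1}`-isolation number `ι_k(G)`. -/
noncomputable def iotaK {V : Type*} (G : SimpleGraph V) (k : ℕ) : ℕ :=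
  sInf {m | ∃ S : Set V, S.Finite ∧ IsKIsolating G k S ∧ S.ncard = m}

/-- `S` is an `H`-isolating set of `G`: the graph `G - N[S]` contains no
subgraph isomorphic to `H`. -/
def IsIsolating {V W : Type*} (G : SimpleGraph V) (H : SimpleGraph W) (S : Set V) : Prop :=
  ¬ ∃ f : W → ((closedNbhd G S)ᶜ : Set V), Function.Injective f ∧
      ∀ a b : W, H.Adj a b → G.Adj (f a).1 (f b).1

/-- The `H`-isolation number `ι(G, H)`. -/
noncomputable def isolationNumber {V W : Type*} (G : SimpleGraph V) (H : SimpleGraph W) : ℕ :=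
  sInf {m | ∃ S : Set V, S.Finite ∧ IsIsolating G H S ∧ S.ncard = m}

/-- The domination number `γ(G)`. -/
noncomputable def dominationNumber {V : Type*} (G : SimpleGraph V) : ℕ :=
  sInf {m | ∃ S : Set V, S.Finite ∧ closedNbhd G S = Set.univ ∧ S.ncard = m}

section Noncrossing

variable {α : Type*} [LinearOrder α]

/-- Drawn as chords of a convex polygon whose vertices are placed in the order of `α`, no two
pairs of `C` cross. -/
def Noncrossing (C : Finset (α × α)) : Prop :=
  ∀ p ∈ C, ∀ q ∈ C, ¬(p.1 < q.1 ∧ q.1 < p.2 ∧ p.2 < q.2)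

theorem Noncrossing.mono {C D : Finset (α × α)} (hD : Noncrossing D) (h : C ⊆ D) :
    Noncrossing C :=
  fun p hp q hq => hD p (h hp) q (h hq)

theorem Noncrossing.insert_of_forall_le {C : Finset (α × α)} (hC : Noncrossing C) {a b : α}
    (hab : ∀ p ∈ C, a ≤ p.1 ∧ p.2 ≤ b) : Noncrossing (insert (a, b) C) := by
  simp only [Noncrossing, Finset.mem_insert, forall_eq_or_imp]
  refine ⟨⟨by simp, fun q hq h => ?_⟩, fun p hp => ⟨fun h => ?_, hC p hp⟩⟩
  · exact (hab q hq).2.not_gt h.2.2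
  · exact (hab p hp).1.not_gt h.1

def between (S : Finset α) (a b : α) : Finset α := {x ∈ S | a < x ∧ x < b}

/-- If `(a, b)` has the fewest, but at least one, vertices of `S` between its ends, a pair at the
first of them, `v`, ends at `a` or at the vertex of `S` following `v`. -/
theorem Noncrossing.card_incident_le_two {S : Finset α} {C D : Finset (α × α)}
    (hC : ∀ p ∈ C, p.1 < p.2 ∧ p.1 ∈ S ∧ p.2 ∈ S) (hD : Noncrossing D) (hCD : C ⊆ D) {a b : α}
    (habD : (a, b) ∈ D) (hgap : (between S a b).Nonempty)
    (hmin : ∀ p ∈ D, (between S p.1 p.2).Nonempty →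
      (between S a b).card ≤ (between S p.1 p.2).card) :
    {p ∈ C | p.1 = (between S a b).min' hgap ∨ p.2 = (between S a b).min' hgap}.card ≤ 2 := by
  set v := (between S a b).min' hgap
  obtain ⟨-, hav, hvb⟩ := Finset.mem_filter.1 ((between S a b).min'_mem hgap)
  have hleft : ∀ x, (x, v) ∈ C → x = a := by
    intro x hx
    obtain ⟨hxv, hxS, -⟩ := hC _ hx
    refine le_antisymm ?_ ?_
    · by_contra! hax
      exact ((between S a b).min'_le x (Finset.mem_filter.2 ⟨hxS, hax, hxv.trans hvb⟩)).not_gt hxv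
    · by_contra! hxa
      exact hD _ (hCD hx) _ habD ⟨hxa, hav, hvb⟩
  have hright : ∀ y z, (v, y) ∈ C → (v, z) ∈ C → ¬y < z := by
    intro y z hy hz hyz
    obtain ⟨hvy, -, hyS⟩ := hC _ hy
    have hzb : z ≤ b := not_lt.1 fun hbz => hD _ habD _ (hCD hz) ⟨hav, hvb, hbz⟩
    have hsub : between S v z ⊂ between S a b := by
      refine Finset.ssubset_iff_of_subset (fun x hx => ?_) |>.2 ⟨v, ?_, fun h => ?_⟩
      · obtain ⟨hxS, hvx, hxz⟩ := Finset.mem_filter.1 hx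
        exact Finset.mem_filter.2 ⟨hxS, hav.trans hvx, hxz.trans_le hzb⟩
      · exact (between S a b).min'_mem hgap
      · exact lt_irrefl _ (Finset.mem_filter.1 h).2.1
    exact (Finset.card_lt_card hsub).not_ge
      (hmin _ (hCD hz) ⟨y, Finset.mem_filter.2 ⟨hyS, hvy, hyz⟩⟩)
  rw [Finset.filter_or]
  refine (Finset.card_union_le _ _).trans (add_le_add (b := 1) (d := 1) ?_ ?_) <;>
    refine Finset.card_le_one.2 fun p hp q hq => ?_
  · obtain ⟨⟨x, y⟩, ⟨hpC, rfl : x = v⟩⟩ := p, Finset.mem_filter.1 hp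
    obtain ⟨⟨x', z⟩, ⟨hqC, rfl : x' = v⟩⟩ := q, Finset.mem_filter.1 hq
    exact Prod.ext rfl (le_antisymm (not_lt.1 (hright z y hqC hpC)) (not_lt.1 (hright y z hpC hqC)))
  · obtain ⟨⟨x, y⟩, ⟨hpC, rfl : y = v⟩⟩ := p, Finset.mem_filter.1 hp
    obtain ⟨⟨x', z⟩, ⟨hqC, rfl : z = v⟩⟩ := q, Finset.mem_filter.1 hq
    rw [hleft x hpC, hleft x' hqC]

theorem Noncrossing.exists_card_incident_le_two {S : Finset α} {C : Finset (α × α)}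
    (hC : ∀ p ∈ C, p.1 < p.2 ∧ p.1 ∈ S ∧ p.2 ∈ S) (hnc : Noncrossing C) (hS : 3 ≤ S.card) :
    ∃ v ∈ S, {p ∈ C | p.1 = v ∨ p.2 = v}.card ≤ 2 := by
  have hne : S.Nonempty := Finset.card_pos.1 (by omega)
  have hlt : S.min' hne < S.max' hne := S.min'_lt_max'_of_card (by omega)
  set D := insert (S.min' hne, S.max' hne) C
  have hD : Noncrossing D := hnc.insert_of_forall_le fun p hp =>
    ⟨S.min'_le _ (hC p hp).2.1, S.le_max' _ (hC p hp).2.2⟩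
  have hmM : (between S (S.min' hne) (S.max' hne)).Nonempty := by
    obtain ⟨x, hx⟩ : ((S.erase (S.min' hne)).erase (S.max' hne)).Nonempty := by
      refine Finset.card_pos.1 ?_
      rw [Finset.card_erase_of_mem (Finset.mem_erase.2 ⟨hlt.ne', S.max'_mem hne⟩),
        Finset.card_erase_of_mem (S.min'_mem hne)]
      omega
    simp only [Finset.mem_erase] at hx
    exact ⟨x, Finset.mem_filter.2 ⟨hx.2.2, lt_of_le_of_ne (S.min'_le _ hx.2.2) (Ne.symm hx.2.1),
      lt_of_le_of_ne (S.le_max' _ hx.2.2) hx.1⟩⟩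
  obtain ⟨⟨a, b⟩, hab, hmin⟩ := Finset.exists_min_image {p ∈ D | (between S p.1 p.2).Nonempty}
    (fun p => (between S p.1 p.2).card) ⟨_, Finset.mem_filter.2 ⟨Finset.mem_insert_self _ _, hmM⟩⟩
  obtain ⟨habD, hgap⟩ := Finset.mem_filter.1 hab
  refine ⟨(between S a b).min' hgap, (Finset.mem_filter.1 ((between S a b).min'_mem hgap)).1, ?_⟩
  exact hD.card_incident_le_two hC (Finset.subset_insert _ _) habD hgap
    fun p hp hpgap => hmin p (Finset.mem_filter.2 ⟨hp, hpgap⟩)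

theorem Noncrossing.card_le {S : Finset α} {C : Finset (α × α)}
    (hC : ∀ p ∈ C, p.1 < p.2 ∧ p.1 ∈ S ∧ p.2 ∈ S) (hnc : Noncrossing C) (hS : 2 ≤ S.card) :
    C.card ≤ 2 * S.card - 3 := by
  induction S using Finset.strongInduction generalizing C with
  | H S ih =>
  rcases hS.eq_or_lt with hS2 | hS3
  · have hC1 : C.card ≤ 1 := Finset.card_le_one.2 fun p hp q hq => by
      obtain ⟨hp12, hp1, hp2⟩ := hC p hp
      obtain ⟨hq12, hq1, hq2⟩ := hC q hq
      have hSp : S = {p.1, p.2} := (Finset.eq_of_subset_of_card_le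
        (Finset.insert_subset hp1 (Finset.singleton_subset_iff.2 hp2))
        (by rw [Finset.card_pair hp12.ne]; omega)).symm
      rw [hSp, Finset.mem_insert, Finset.mem_singleton] at hq1 hq2
      rcases hq1 with h1 | h1 <;> rcases hq2 with h2 | h2 <;> rw [h1, h2] at hq12
      · exact absurd hq12 (lt_irrefl _)
      · exact Prod.ext h1.symm h2.symm
      · exact absurd hp12 (lt_asymm hq12)
      · exact absurd hq12 (lt_irrefl _)
    omega
  · obtain ⟨v, hv, hinc⟩ := hnc.exists_card_incident_le_two hC hS3
    have hrest := ih (S.erase v) (Finset.erase_ssubset hv)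
      (C := {p ∈ C | ¬(p.1 = v ∨ p.2 = v)})
      (fun p hp => by
        obtain ⟨hpC, hpv⟩ := Finset.mem_filter.1 hp
        push Not at hpv
        obtain ⟨h12, h1, h2⟩ := hC p hpC
        exact ⟨h12, Finset.mem_erase.2 ⟨hpv.1, h1⟩, Finset.mem_erase.2 ⟨hpv.2, h2⟩⟩)
      (hnc.mono (Finset.filter_subset _ _))
      (by rw [Finset.card_erase_of_mem hv]; omega)
    rw [Finset.card_erase_of_mem hv] at hrest
    rw [← Finset.card_filter_add_card_filter_not (fun p => p.1 = v ∨ p.2 = v)]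
    omega

end Noncrossing

theorem card_filter_lt_adj {V α : Type*} {G : SimpleGraph V} [LinearOrder α] [Fintype α]
    [DecidableRel G.Adj] (σ : α ≃ V) :
    (Finset.univ.filter fun p : α × α => p.1 < p.2 ∧ G.Adj (σ p.1) (σ p.2)).card =
      Nat.card G.edgeSet := by
  set E := Finset.univ.filter fun p : α × α => p.1 < p.2 ∧ G.Adj (σ p.1) (σ p.2)
  have himage : G.edgeSet = (fun p : α × α => s(σ p.1, σ p.2)) '' E := by
    ext e
    induction e with
    | h x y =>
      refine ⟨fun hxy => ?_, ?_⟩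
      · rcases lt_trichotomy (σ.symm x) (σ.symm y) with hlt | heq | hlt
        · exact ⟨(σ.symm x, σ.symm y), by simpa [E] using ⟨hlt, hxy⟩, by simp⟩
        · exact absurd (σ.symm.injective heq) hxy.ne
        · exact ⟨(σ.symm y, σ.symm x), by simpa [E] using ⟨hlt, hxy.symm⟩, by simp [Sym2.eq_swap]⟩
      · rintro ⟨p, hp, hpe⟩
        rw [← hpe]
        exact (Finset.mem_filter.1 hp).2.2
  have hinj : Set.InjOn (fun p : α × α => s(σ p.1, σ p.2)) E := by
    rintro ⟨a, b⟩ hab ⟨c, d⟩ hcd h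
    simp only [E, Finset.coe_filter, Finset.mem_univ, true_and, Set.mem_ofPred_eq] at hab hcd
    rcases Sym2.eq_iff.1 h with ⟨hac, hbd⟩ | ⟨had, hbc⟩
    · simp only [σ.apply_eq_iff_eq] at hac hbd
      rw [hac, hbd]
    · simp only [σ.apply_eq_iff_eq] at had hbc
      rw [had, hbc] at hab
      exact absurd (hab.1.trans hcd.1) (lt_irrefl _)
  rw [Nat.card_coe_set_eq, himage, hinj.ncard_image, Set.ncard_coe_finset]

section Witness

variable {V : Type*} {G : SimpleGraph V} {n : ℕ} {σ : Fin n ≃ V}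

theorem MopWitness.adj_of_val_eq_succ (hσ : MopWitness G n σ) {i j : Fin n}
    (h : j.val = i.val + 1) : G.Adj (σ i) (σ j) := by
  have hj : finNext i = j := Fin.ext (by
    change (i.val + 1) % n = j.val
    rw [← h, Nat.mod_eq_of_lt j.isLt])
  exact hj ▸ hσ.1 i

theorem MopWitness.adj_of_val_eq_zero_of_val_eq_last (hσ : MopWitness G n σ) {i j : Fin n}
    (hi : i.val = 0) (hj : j.val = n - 1) : G.Adj (σ i) (σ j) := by
  have hji : finNext j = i := Fin.ext (by
    change (j.val + 1) % n = i.val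
    rw [hj, hi, Nat.sub_add_cancel (by omega), Nat.mod_self])
  exact (hji ▸ hσ.1 j).symm

/-- Otherwise `u v` could join the `2 n - 3` edges, against `Noncrossing.card_le`. -/
theorem MopWitness.exists_crossing_of_not_adj (hσ : MopWitness G n σ) {u v : Fin n} (huv : u < v)
    (hnadj : ¬G.Adj (σ u) (σ v)) :
    ∃ p q : Fin n, G.Adj (σ p) (σ q) ∧ (p < u ∧ u < q ∧ q < v ∨ u < p ∧ p < v ∧ v < q) := by
  classical
  by_contra hno
  set E := Finset.univ.filter fun p : Fin n × Fin n => p.1 < p.2 ∧ G.Adj (σ p.1) (σ p.2)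
  have hmem : ∀ p ∈ E, p.1 < p.2 ∧ G.Adj (σ p.1) (σ p.2) := fun p hp => (Finset.mem_filter.1 hp).2
  have hnc : Noncrossing (insert (u, v) E) := by
    simp only [Noncrossing, Finset.mem_insert, forall_eq_or_imp]
    refine ⟨⟨fun h => lt_irrefl _ h.1, fun q hq h => hno ⟨q.1, q.2, (hmem q hq).2, Or.inr h⟩⟩,
      fun p hp => ⟨fun h => hno ⟨p.1, p.2, (hmem p hp).2, Or.inl h⟩, fun q hq h => ?_⟩⟩
    exact hσ.2.1 _ _ _ _ (hmem p hp).2 (hmem q hq).2 h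
  have hcard := hnc.card_le (S := Finset.univ)
    (by simp only [Finset.mem_insert, Finset.mem_univ, and_true, forall_eq_or_imp]
        exact ⟨huv, fun p hp => (hmem p hp).1⟩)
    (by rw [Finset.card_univ, Fintype.card_fin]; omega)
  rw [Finset.card_insert_of_notMem (fun h => hnadj (hmem _ h).2), card_filter_lt_adj, hσ.2.2,
    Finset.card_univ, Fintype.card_fin] at hcard
  omega

/-- `b` is the last neighbour of `a` before `c`: an edge crossing `b c` would cross `a c` or `a b`,
or end at a later neighbour of `a`. -/
theorem MopWitness.exists_apex (hσ : MopWitness G n σ) {a c : Fin n} (hac : a.val + 2 ≤ c.val)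
    (h : G.Adj (σ a) (σ c)) : ∃ b, a < b ∧ b < c ∧ G.Adj (σ a) (σ b) ∧ G.Adj (σ b) (σ c) := by
  classical
  set N := Finset.univ.filter fun b : Fin n => a < b ∧ b < c ∧ G.Adj (σ a) (σ b)
  have hN : N.Nonempty := ⟨⟨a.val + 1, by omega⟩, Finset.mem_filter.2
    ⟨Finset.mem_univ _, Fin.lt_def.2 (Nat.lt_succ_self _), Fin.lt_def.2 (by simp only; omega),
      hσ.adj_of_val_eq_succ rfl⟩⟩
  obtain ⟨-, hab, hbc, hab'⟩ := Finset.mem_filter.1 (N.max'_mem hN)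
  set b := N.max' hN
  refine ⟨b, hab, hbc, hab', ?_⟩
  by_contra hbc'
  obtain ⟨p, q, hpq, ⟨hpb, hbq, hqc⟩ | ⟨hbp, hpc, hcq⟩⟩ := hσ.exists_crossing_of_not_adj hbc hbc'
  · rcases lt_trichotomy p a with hpa | rfl | hap
    · exact hσ.2.1 _ _ _ _ hpq h ⟨hpa, hab.trans hbq, hqc⟩
    · exact (N.le_max' q (Finset.mem_filter.2 ⟨Finset.mem_univ _, hab.trans hbq, hqc, hpq⟩)).not_gt
        hbq
    · exact hσ.2.1 _ _ _ _ hab' hpq ⟨hap, hpb, hbq⟩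
  · exact hσ.2.1 _ _ _ _ h hpq ⟨hab.trans hbp, hpc, hcq⟩

/-- An edge `a b` with `a < b` cuts off an arc of `b - a - 1` vertices. Starting from the triangle
on `a c`, while one of the two arcs under it has more than `k + 2` vertices, pass to the triangle
on that side; the arc beyond the new base then has at most `n - (k + 4) - 1 ≤ k + 2` vertices. -/
theorem MopWitness.exists_balanced_triangle_of_adj (hσ : MopWitness G n σ) {k : ℕ}
    (hn : n ≤ 2 * k + 7) {a c : Fin n} (hac : G.Adj (σ a) (σ c)) (h2 : a.val + 2 ≤ c.val)
    (hout : n ≤ c.val - a.val + k + 3) :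
    ∃ a b c : Fin n, a < b ∧ b < c ∧
      G.Adj (σ a) (σ b) ∧ G.Adj (σ b) (σ c) ∧ G.Adj (σ a) (σ c) ∧
      b.val - a.val ≤ k + 3 ∧ c.val - b.val ≤ k + 3 ∧ n + a.val - c.val ≤ k + 3 := by
  induction hspan : c.val - a.val using Nat.strong_induction_on generalizing a c with
  | _ m ih =>
  obtain ⟨b, hab, hbc, hab', hbc'⟩ := hσ.exists_apex h2 hac
  by_cases hleft : k + 4 ≤ b.val - a.val
  · exact ih _ (by omega) hab' (by omega) (by omega) rfl
  by_cases hright : k + 4 ≤ c.val - b.val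
  · exact ih _ (by omega) hbc' (by omega) (by omega) rfl
  exact ⟨a, b, c, hab, hbc, hab', hbc', hac, by omega, by omega, by omega⟩

theorem MopWitness.exists_balanced_triangle (hσ : MopWitness G n σ) {k : ℕ} (hn3 : 3 ≤ n)
    (hn : n ≤ 2 * k + 7) :
    ∃ a b c : Fin n, a < b ∧ b < c ∧
      G.Adj (σ a) (σ b) ∧ G.Adj (σ b) (σ c) ∧ G.Adj (σ a) (σ c) ∧
      b.val - a.val ≤ k + 3 ∧ c.val - b.val ≤ k + 3 ∧ n + a.val - c.val ≤ k + 3 :=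
  hσ.exists_balanced_triangle_of_adj hn (a := ⟨0, by omega⟩) (c := ⟨n - 1, by omega⟩)
    (hσ.adj_of_val_eq_zero_of_val_eq_last rfl rfl) (by simp only; omega) (by simp only; omega)

theorem finNext_eq_add_one [NeZero n] (i : Fin n) : finNext i = i + 1 :=
  Fin.ext (by simp [finNext, Fin.val_add])

theorem MopWitness.rotate [NeZero n] (hσ : MopWitness G n σ) (t : Fin n) :
    MopWitness G n ((Equiv.addRight t).trans σ) := by
  refine ⟨fun i => ?_, fun a b c d hab hcd h => ?_, hσ.2.2⟩
  · simpa [finNext_eq_add_one, add_right_comm] using hσ.1 (i + t)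
  · simp only [Equiv.trans_apply, Equiv.coe_addRight] at hab hcd
    -- the shift carries a final segment of `a < c < b < d` past `n`, so the shifted ends
    -- interleave in one of these four ways
    have h1 := hσ.2.1 _ _ _ _ hab hcd
    have h2 := hσ.2.1 _ _ _ _ hcd.symm hab
    have h3 := hσ.2.1 _ _ _ _ hab.symm hcd.symm
    have h4 := hσ.2.1 _ _ _ _ hcd hab.symm
    simp only [Fin.lt_def, Fin.val_add_eq_ite] at h h1 h2 h3 h4
    split_ifs at h1 h2 h3 h4 <;> omega

theorem MopWitness.mem_Icc_of_adj (hσ : MopWitness G n σ) {a b i j : Fin n}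
    (hab : G.Adj (σ a) (σ b)) (hi : i ∈ Set.Ioo a b) (hij : G.Adj (σ i) (σ j)) :
    j ∈ Set.Icc a b := by
  refine ⟨not_lt.1 fun hja => ?_, not_lt.1 fun hbj => ?_⟩
  · exact hσ.2.1 _ _ _ _ hij.symm hab ⟨hja, hi.1, hi.2⟩
  · exact hσ.2.1 _ _ _ _ hab hij ⟨hi.1, hi.2, hbj⟩

end Witness

theorem ncard_le_of_val_mem_Ioo {V : Type*} {n : ℕ} (σ : Fin n ≃ V) {S : Set V} {lo hi : ℕ}
    {i : Fin n} (hiI : i.val ∈ Set.Ioo lo hi)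
    (hS : ∀ w ∈ S, σ.symm w ≠ i ∧ (σ.symm w).val ∈ Set.Ioo lo hi) : S.ncard ≤ hi - lo - 2 := by
  calc S.ncard ≤ (((Finset.Ioo lo hi).erase i.val : Finset ℕ) : Set ℕ).ncard := by
        refine Set.ncard_le_ncard_of_injOn (fun w => (σ.symm w).val) (fun w hw => ?_)
          (fun w _ w' _ h => σ.symm.injective (Fin.ext h))
        obtain ⟨hne, hmem⟩ := hS w hw
        exact Finset.mem_erase.2 ⟨fun h => hne (Fin.ext h), Finset.mem_Ioo.2 hmem⟩
    _ = hi - lo - 2 := by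
        rw [Set.ncard_coe_finset, Finset.card_erase_of_mem (Finset.mem_Ioo.2 hiI), Nat.card_Ioo]
        omega

theorem iotaK_le_one_of_isKIsolating {V : Type*} {G : SimpleGraph V} {k : ℕ} {x : V}
    (h : IsKIsolating G k {x}) : iotaK G k ≤ 1 :=
  Nat.sInf_le ⟨{x}, Set.finite_singleton x, h, Set.ncard_singleton x⟩

theorem mem_closedNbhd_singleton {V : Type*} {G : SimpleGraph V} {x w : V} :
    w ∈ closedNbhd G {x} ↔ w = x ∨ G.Adj x w := by
  simp [closedNbhd]

section Isolation

variable {V : Type*} {G : SimpleGraph V} {n : ℕ} {σ : Fin n ≃ V} [NeZero n] {k : ℕ}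

/-- The candidates for `(lo, hi)` are the arcs `(0, q)`, `(q, r)`, `(r, n)` of the triangle `0 q r`,
shrunk by the cycle neighbours `1` and `n - 1` of `0`. -/
theorem MopWitness.exists_arc_of_triangle (hσ : MopWitness G n σ) {q r : Fin n} (hqr : q < r)
    (h0q : G.Adj (σ 0) (σ q)) (hqr' : G.Adj (σ q) (σ r)) (h0r : G.Adj (σ 0) (σ r)) {i : Fin n}
    (hi0 : i ≠ 0) (hi : ¬G.Adj (σ 0) (σ i)) :
    ∃ lo hi : ℕ, (lo = 1 ∧ hi = q.val ∨ lo = q.val ∧ hi = r.val ∨ lo = r.val ∧ hi = n - 1) ∧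
      i.val ∈ Set.Ioo lo hi ∧
      ∀ j, G.Adj (σ i) (σ j) → j ≠ 0 → ¬G.Adj (σ 0) (σ j) → j.val ∈ Set.Ioo lo hi := by
  have h0 : (0 : Fin n).val = 0 := Fin.val_zero n
  have hfar : ∀ j : Fin n, ¬G.Adj (σ 0) (σ j) → j.val ≠ 1 ∧ j ≠ q ∧ j ≠ r ∧ j.val ≠ n - 1 :=
    fun j hj => ⟨fun h => hj (hσ.adj_of_val_eq_succ (by omega)), fun h => hj (h ▸ h0q),
      fun h => hj (h ▸ h0r), fun h => hj (hσ.adj_of_val_eq_zero_of_val_eq_last h0 h)⟩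
  have hi' := hfar i hi
  have hi0' : 0 < i.val := Fin.pos_iff_ne_zero.2 hi0
  rcases lt_trichotomy i q with hiq | rfl | hqi
  · refine ⟨1, q.val, by omega, ⟨by omega, hiq⟩, fun j hij hj0 hj => ?_⟩
    obtain ⟨-, hjq⟩ := hσ.mem_Icc_of_adj h0q ⟨Fin.lt_def.2 (by omega), hiq⟩ hij
    have := hfar j hj
    have := Fin.pos_iff_ne_zero.2 hj0
    constructor <;> omega
  · exact absurd h0q hi
  rcases lt_trichotomy i r with hir | rfl | hri
  · refine ⟨q.val, r.val, by omega, ⟨hqi, hir⟩, fun j hij hj0 hj => ?_⟩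
    obtain ⟨hqj, hjr⟩ := hσ.mem_Icc_of_adj hqr' ⟨hqi, hir⟩ hij
    have := hfar j hj
    constructor <;> omega
  · exact absurd h0r hi
  · refine ⟨r.val, n - 1, by omega, ⟨hri, by omega⟩, fun j hij hj0 hj => ?_⟩
    have hrj : r ≤ j := not_lt.1 fun hjr =>
      (hσ.mem_Icc_of_adj h0r ⟨Fin.pos_iff_ne_zero.2 hj0, hjr⟩ hij.symm).2.not_gt hri
    have := hfar j hj
    constructor <;> omega

theorem MopWitness.isKIsolating_of_triangle (hσ : MopWitness G n σ) {q r : Fin n}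
    (hqr : q < r) (h0q : G.Adj (σ 0) (σ q)) (hqr' : G.Adj (σ q) (σ r))
    (h0r : G.Adj (σ 0) (σ r)) (hq : q.val ≤ k + 3) (hr : r.val - q.val ≤ k + 2)
    (hr' : n - r.val ≤ k + 3) : IsKIsolating G k {σ 0} := by
  have hout : ∀ j, σ j ∉ closedNbhd G {σ 0} ↔ j ≠ 0 ∧ ¬G.Adj (σ 0) (σ j) := fun j => by
    rw [mem_closedNbhd_singleton, σ.apply_eq_iff_eq]
    tauto
  intro w hw
  obtain ⟨i, rfl⟩ := σ.surjective w
  obtain ⟨hi0, hi⟩ := (hout i).1 hw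
  obtain ⟨lo, hi, hlohi, hiI, harc⟩ := hσ.exists_arc_of_triangle hqr h0q hqr' h0r hi0 hi
  refine (ncard_le_of_val_mem_Ioo σ hiI fun w' hw' => ?_).trans (by omega)
  obtain ⟨hadj, hw'⟩ := hw'
  obtain ⟨j, rfl⟩ := σ.surjective w'
  obtain ⟨hj0, hj⟩ := (hout j).1 hw'
  rw [σ.symm_apply_apply]
  exact ⟨fun h => G.irrefl (h ▸ hadj), harc j hadj hj0 hj⟩

/-- The triangle `u v w`, in cyclic order, cuts off arcs of `v - u - 1`, `w - v - 1` and
`u - w - 1` vertices, with the differences taken in `Fin n`. -/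
theorem MopWitness.isKIsolating_of_cyclic_triangle (hσ : MopWitness G n σ) {u v w : Fin n}
    (huvw : (v - u).val < (w - u).val) (huv : G.Adj (σ u) (σ v)) (hvw : G.Adj (σ v) (σ w))
    (huw : G.Adj (σ u) (σ w)) (h1 : (v - u).val ≤ k + 3) (h2 : (w - v).val ≤ k + 2)
    (h3 : (u - w).val ≤ k + 3) : IsKIsolating G k {σ u} := by
  set τ := (Equiv.addRight u).trans σ
  have hτ : ∀ x, τ (x - u) = σ x := fun x => by simp [τ]
  have hqr : v - u < w - u := Fin.lt_def.2 huvw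
  have hq : 0 < (v - u).val := Fin.pos_iff_ne_zero.2 (sub_ne_zero.2 fun h => G.irrefl (h ▸ huv))
  have e2 : (w - v).val = (w - u).val - (v - u).val := by
    rw [← Fin.coe_sub_iff_le.2 hqr.le, sub_sub_sub_cancel_right]
  have e3 : (u - w).val = n - (w - u).val := by
    rw [← neg_sub, ← zero_sub, Fin.coe_sub_iff_lt.2 (hq.trans huvw), Fin.val_zero, add_zero]
  have h0 : τ 0 = σ u := by rw [← sub_self u, hτ]
  rw [← h0]
  exact (hσ.rotate u).isKIsolating_of_triangle hqr (by rwa [h0, hτ]) (by rwa [hτ, hτ])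
    (by rwa [h0, hτ]) h1 (by omega) (by omega)

end Isolation

theorem iotaK_mop_le_one_of_small_general {V : Type*} (k : ℕ)
    (G : SimpleGraph V) (hG : IsMop G) (h : Nat.card V ≤ 2 * k + 7) :
    iotaK G k ≤ 1 := by
  obtain ⟨n, hn, σ, hσ⟩ := hG
  have : NeZero n := ⟨by omega⟩
  rw [Nat.card_congr σ.symm, Nat.card_eq_fintype_card, Fintype.card_fin] at h
  obtain ⟨a, b, c, hab, hbc, hab', hbc', hac', h1, h2, h3⟩ := hσ.exists_balanced_triangle hn h
  have eba : (b - a).val = b.val - a.val := Fin.coe_sub_iff_le.2 hab.le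
  have eca : (c - a).val = c.val - a.val := Fin.coe_sub_iff_le.2 (hab.trans hbc).le
  have ecb : (c - b).val = c.val - b.val := Fin.coe_sub_iff_le.2 hbc.le
  have eab : (a - b).val = n + a.val - b.val := Fin.coe_sub_iff_lt.2 hab
  have eac : (a - c).val = n + a.val - c.val := Fin.coe_sub_iff_lt.2 (hab.trans hbc)
  have ebc : (b - c).val = n + b.val - c.val := Fin.coe_sub_iff_lt.2 hbc
  -- the three arcs have at most `n - 3 ≤ 2 k + 4` vertices together; isolate the vertex
  -- opposite the smallest one
  rcases (by omega : c.val - b.val ≤ k + 2 ∨ n + a.val - c.val ≤ k + 2 ∨ b.val - a.val ≤ k + 2)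
    with hsmall | hsmall | hsmall
  · exact iotaK_le_one_of_isKIsolating (hσ.isKIsolating_of_cyclic_triangle (u := a) (v := b)
      (w := c) (by omega) hab' hbc' hac' (by omega) (by omega) (by omega))
  · exact iotaK_le_one_of_isKIsolating (hσ.isKIsolating_of_cyclic_triangle (u := b) (v := c)
      (w := a) (by omega) hbc' hac'.symm hab'.symm (by omega) (by omega) (by omega))
  · exact iotaK_le_one_of_isKIsolating (hσ.isKIsolating_of_cyclic_triangle (u := c) (v := a)
      (w := b) (by omega) hac'.symm hab' hbc'.symm (by omega) (by omega) (by omega))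

/-- for `k ≥ 0` and a mop `G` of order `n ≤ 2k+7`, `ι_k(G) ≤ 1`. -/
theorem iotaK_mop_le_one_of_small {V : Type*} [Finite V] (k : ℕ)
    (G : SimpleGraph V) (hG : IsMop G) (h : Nat.card V ≤ 2 * k + 7) :
    iotaK G k ≤ 1 :=
  iotaK_mop_le_one_of_small_general k G hG h

end MopPaper
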